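/- Let ι be a finite index type and (V_i)_{i∈ι} a family of real normed vector spaces, and let v be an element of the algebraic tensor product ⨂_{i∈ι} V_i. Then for every j ∈ ι, the j-th minimal subspace computed with algebraic dual functionals coincides with the one computed with continuous dual functionals: span{(id_j ⊗ φ)(v) : φ_k ∈ (V_k)^* algebraic, k ≠ j} = span{(id_j ⊗ φ)(v) : φ_k ∈ (V_k)^* continuous, k ≠ j}. -/

import Mathlib

open scoped TensorProduct

section
variable {ι : Type*} [Fintype ι] [deq : DecidableEq ι] {𝕜 : Type*} [Field 𝕜]
  {V : ι → Type*} [∀ i, AddCommGroup (V i)] [∀ i, Module 𝕜 (V i)]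

/-- The multilinear map `(m_i)_{i} ↦ (∏_{k ≠ j} φ_k (m_k)) • m_j`. -/
def contractML (j : ι) (φ : ∀ k, V k →ₗ[𝕜] 𝕜) : MultilinearMap 𝕜 V (V j) where
  toFun m := (∏ k ∈ Finset.univ.erase j, φ k (m k)) • m j
  map_update_add' := by
    intro inst m k x y
    have h : inst = deq := Subsingleton.elim _ _
    subst h
    rcases eq_or_ne k j with rfl | hkj
    · have hprod : ∀ z : V k,
          (∏ i ∈ Finset.univ.erase k, φ i (Function.update m k z i))
            = ∏ i ∈ Finset.univ.erase k, φ i (m i) := fun z =>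
        Finset.prod_congr rfl fun i hi => by
          rw [Function.update_of_ne (Finset.ne_of_mem_erase hi)]
      rw [hprod, hprod, hprod, Function.update_self, Function.update_self,
        Function.update_self, smul_add]
    · have hmem : k ∈ Finset.univ.erase j := Finset.mem_erase.2 ⟨hkj, Finset.mem_univ k⟩
      have hprod : ∀ z : V k,
          (∏ i ∈ Finset.univ.erase j, φ i (Function.update m k z i))
            = φ k z * ∏ i ∈ (Finset.univ.erase j) \ {k}, φ i (m i) := by
        intro z
        have h1 : ∀ i, φ i (Function.update m k z i)
            = Function.update (fun i => φ i (m i)) k (φ k z) i := fun i =>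
          Function.apply_update (fun i v => φ i v) m k z i
        rw [Finset.prod_congr rfl (fun i _ => h1 i)]
        exact Finset.prod_update_of_mem hmem _ _
      have hj : ∀ z : V k, Function.update m k z j = m j := fun z =>
        Function.update_of_ne (Ne.symm hkj) _ _
      rw [hprod, hprod, hprod, hj, hj, hj, map_add, add_mul, add_smul]
  map_update_smul' := by
    intro inst m k c x
    have h : inst = deq := Subsingleton.elim _ _
    subst h
    rcases eq_or_ne k j with rfl | hkj
    · have hprod : ∀ z : V k,
          (∏ i ∈ Finset.univ.erase k, φ i (Function.update m k z i))
            = ∏ i ∈ Finset.univ.erase k, φ i (m i) := fun z =>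
        Finset.prod_congr rfl fun i hi => by
          rw [Function.update_of_ne (Finset.ne_of_mem_erase hi)]
      rw [hprod, hprod, Function.update_self, Function.update_self, smul_comm]
    · have hmem : k ∈ Finset.univ.erase j := Finset.mem_erase.2 ⟨hkj, Finset.mem_univ k⟩
      have hprod : ∀ z : V k,
          (∏ i ∈ Finset.univ.erase j, φ i (Function.update m k z i))
            = φ k z * ∏ i ∈ (Finset.univ.erase j) \ {k}, φ i (m i) := by
        intro z
        have h1 : ∀ i, φ i (Function.update m k z i)
            = Function.update (fun i => φ i (m i)) k (φ k z) i := fun i =>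
          Function.apply_update (fun i v => φ i v) m k z i
        rw [Finset.prod_congr rfl (fun i _ => h1 i)]
        exact Finset.prod_update_of_mem hmem _ _
      have hj : ∀ z : V k, Function.update m k z j = m j := fun z =>
        Function.update_of_ne (Ne.symm hkj) _ _
      rw [hprod, hprod, hj, hj, map_smul, smul_eq_mul, mul_assoc, mul_smul]

/-- The contraction `id_j ⊗ φ : ⨂ᵢ Vᵢ → V j` obtained by lifting the multilinear map
`(m_i)ᵢ ↦ (∏_{k ≠ j} φ_k (m_k)) • m_j`. -/
noncomputable def contract (j : ι) (φ : ∀ k, V k →ₗ[𝕜] 𝕜) :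
    (⨂[𝕜] i, V i) →ₗ[𝕜] V j :=
  PiTensorProduct.lift (contractML j φ)

/-- The `j`-th minimal subspace of a tensor `v`. -/
noncomputable def minimalSubspace (j : ι) (v : ⨂[𝕜] i, V i) : Submodule 𝕜 (V j) :=
  Submodule.span 𝕜 {x | ∃ φ : ∀ k, V k →ₗ[𝕜] 𝕜, contract j φ v = x}


end

/-!
Every tensor lies in the image of `⨂ᵢ Wᵢ` for finite-dimensional subspaces `Wᵢ ≤ Vᵢ`, and on that
image a contraction depends only on the restrictions of the functionals to the `Wᵢ`. A linear
functional on a finite-dimensional subspace is continuous, so by Hahn–Banach it agrees there with a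
continuous functional on the whole space.
-/

namespace PiTensorProduct

variable {ι R : Type*} [CommSemiring R] {M : ι → Type*} [∀ i, AddCommMonoid (M i)]
  [∀ i, Module R (M i)]

theorem range_map_subtype_mono {W W' : ∀ i, Submodule R (M i)} (h : W ≤ W') :
    LinearMap.range (map fun i => (W i).subtype) ≤
      LinearMap.range (map fun i => (W' i).subtype) := by
  have hcomp : (map fun i => (W i).subtype) =
      (map fun i => (W' i).subtype) ∘ₗ map fun i => Submodule.inclusion (h i) := by
    rw [← map_comp]
    rfl
  rw [hcomp]
  exact LinearMap.range_comp_le_range _ _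

theorem exists_fg_mem_range_map_subtype (v : ⨂[R] i, M i) :
    ∃ W : ∀ i, Submodule R (M i), (∀ i, (W i).FG) ∧
      v ∈ LinearMap.range (map fun i => (W i).subtype) := by
  induction v using PiTensorProduct.induction_on with
  | smul_tprod r m =>
    refine ⟨fun i => R ∙ m i, fun i => Submodule.fg_span_singleton _,
      r • ⨂ₜ[R] i, ⟨m i, Submodule.mem_span_singleton_self _⟩, ?_⟩
    simp
  | add x y hx hy =>
    obtain ⟨W₁, hW₁, hx⟩ := hx
    obtain ⟨W₂, hW₂, hy⟩ := hy
    exact ⟨W₁ ⊔ W₂, fun i => (hW₁ i).sup (hW₂ i),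
      add_mem (range_map_subtype_mono le_sup_left hx) (range_map_subtype_mono le_sup_right hy)⟩

end PiTensorProduct

section
variable {ι : Type*} [Fintype ι] [DecidableEq ι] {𝕜 : Type*} [Field 𝕜]
  {V : ι → Type*} [∀ i, AddCommGroup (V i)] [∀ i, Module 𝕜 (V i)]

theorem contract_tprod (j : ι) (φ : ∀ k, V k →ₗ[𝕜] 𝕜) (m : ∀ i, V i) :
    contract j φ (⨂ₜ[𝕜] i, m i) = (∏ k ∈ Finset.univ.erase j, φ k (m k)) • m j :=
  PiTensorProduct.lift.tprod m

theorem contract_eqOn_range_map_subtype (j : ι) (W : ∀ i, Submodule 𝕜 (V i))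
    {φ ψ : ∀ k, V k →ₗ[𝕜] 𝕜} (h : ∀ k ≠ j, ∀ x ∈ W k, φ k x = ψ k x) :
    Set.EqOn (contract j φ) (contract j ψ)
      (LinearMap.range (PiTensorProduct.map fun i => (W i).subtype)) := by
  suffices (contract j φ).comp (PiTensorProduct.map fun i => (W i).subtype) =
      (contract j ψ).comp (PiTensorProduct.map fun i => (W i).subtype) by
    rintro _ ⟨t, rfl⟩
    exact LinearMap.congr_fun this t
  refine PiTensorProduct.ext (MultilinearMap.ext fun m => ?_)
  simp only [LinearMap.compMultilinearMap_apply, LinearMap.comp_apply,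
    PiTensorProduct.map_tprod, contract_tprod, Submodule.subtype_apply]
  congr 1
  exact Finset.prod_congr rfl fun k hk => h k (Finset.ne_of_mem_erase hk) _ (m k).2

end

theorem LinearMap.exists_continuous_eq_on_finiteDimensional {𝕜 E : Type*} [RCLike 𝕜]
    [AddCommGroup E] [TopologicalSpace E] [IsTopologicalAddGroup E] [Module 𝕜 E]
    [ContinuousSMul 𝕜 E] [T2Space E] [PolynormableSpace 𝕜 E]
    (f : E →ₗ[𝕜] 𝕜) (S : Submodule 𝕜 E) [FiniteDimensional 𝕜 S] :
    ∃ g : StrongDual 𝕜 E, ∀ x ∈ S, g x = f x := by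
  obtain ⟨g, hg⟩ := StrongDual.exists_extension S (f.comp S.subtype).toContinuousLinearMap
  exact ⟨g, fun x hx => hg ⟨x, hx⟩⟩

theorem exists_continuous_contract_eq {ι 𝕜 : Type*} [Fintype ι] [DecidableEq ι] [RCLike 𝕜]
    {V : ι → Type*} [∀ i, AddCommGroup (V i)] [∀ i, TopologicalSpace (V i)]
    [∀ i, IsTopologicalAddGroup (V i)] [∀ i, Module 𝕜 (V i)] [∀ i, ContinuousSMul 𝕜 (V i)]
    [∀ i, T2Space (V i)] [∀ i, PolynormableSpace 𝕜 (V i)]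
    (v : ⨂[𝕜] i, V i) (j : ι) (φ : ∀ k, V k →ₗ[𝕜] 𝕜) :
    ∃ ψ : ∀ k, StrongDual 𝕜 (V k),
      contract j (fun k => (ψ k : V k →ₗ[𝕜] 𝕜)) v = contract j φ v := by
  obtain ⟨W, hW, hv⟩ := PiTensorProduct.exists_fg_mem_range_map_subtype v
  have (i : ι) : FiniteDimensional 𝕜 (W i) := Module.Finite.iff_fg.2 (hW i)
  choose ψ hψ using fun k => (φ k).exists_continuous_eq_on_finiteDimensional (W k)
  exact ⟨ψ, contract_eqOn_range_map_subtype j W (fun k _ => hψ k) hv⟩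

section
variable {ι : Type*} [Fintype ι] [DecidableEq ι]
  {V : ι → Type*} [∀ i, NormedAddCommGroup (V i)] [∀ i, NormedSpace ℝ (V i)]

/-- **Minimal subspaces via algebraic or continuous functionals.**
For a tensor `v` in the algebraic tensor product of the normed spaces `Vᵢ`, the `j`-th
minimal subspace computed with algebraic dual functionals coincides with the one computed
with continuous dual functionals. -/
theorem minimalSubspace_algebraic_eq_continuous (v : ⨂[ℝ] i, V i) (j : ι) :
    Submodule.span ℝ {x | ∃ φ : ∀ k, V k →ₗ[ℝ] ℝ, contract j φ v = x} =
    Submodule.span ℝ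
      {x | ∃ φ : ∀ k, V k →L[ℝ] ℝ,
        contract j (fun k => (φ k : V k →ₗ[ℝ] ℝ)) v = x} := by
  refine le_antisymm (Submodule.span_mono ?_) (Submodule.span_mono ?_)
  · rintro _ ⟨φ, rfl⟩
    exact exists_continuous_contract_eq v j φ
  · rintro _ ⟨ψ, rfl⟩
    exact ⟨_, rfl⟩

end
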